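/- arXiv:2304.08854 — 4 statements merged into one kernel-verified Lean document; each statement's English description precedes it below -/
import Mathlib

section
/- Let Δ be a finite set of size ω ≥ 2, let Ω = Δ × Δ, and let (Ω, ℬ) be a 2-(ω², k, λ) design with b blocks. Let G be a group of permutations of Ω, each of the form (α,β) ↦ (σ(α),τ(β)) or (α,β) ↦ (σ(β),τ(α)) for some σ, τ ∈ Sym(Δ), such that G preserves ℬ and acts transitively on ℬ. Then there exist nonnegative integers x and y such that every block B ∈ ℬ contains exactly x ordered pairs (p,q) with (p,q) ∈ Ω₁² and exactly y ordered pairs (p,q) with (p,q) ∈ Ω₂², and moreover 2ω²(ω−1)λ = b·x, ω²(ω−1)²λ = b·y, and 2y = x(ω−1). -/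
/-!
Both `Ω₁²` and `Ω₂²` are unions of orbitals of `Sym(Δ) ≀ S₂` in product action, so the
numbers `x` and `y` of such pairs inside a block are invariant under `G`, hence constant on
the single `G`-orbit `ℬ`. Double counting the flags (ordered pair of points, block through
both) gives `b x = |Ω₁²| λ = 2ω²(ω-1) λ` and `b y = |Ω₂²| λ = ω²(ω-1)² λ`, and comparing
the two yields `2y = x(ω-1)` since `b > 0`.
-/

open Finset

section Design

variable {α : Type*} [Fintype α] [DecidableEq α] {R : α × α → Prop} [DecidablePred R]

theorem sum_card_filter_product_eq_of_design {ℬ : Finset (Finset α)} {lam : ℕ}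
    (hR : ∀ pq, R pq → pq.1 ≠ pq.2)
    (hdes : ∀ p q : α, p ≠ q → #(ℬ.filter fun B => p ∈ B ∧ q ∈ B) = lam) :
    ∑ B ∈ ℬ, #((B ×ˢ B).filter R) = #(univ.filter R) * lam := by
  calc ∑ B ∈ ℬ, #((B ×ˢ B).filter R)
      = ∑ B ∈ ℬ, ∑ pq ∈ univ.filter R, if pq.1 ∈ B ∧ pq.2 ∈ B then 1 else 0 := by
        refine sum_congr rfl fun B _ => ?_
        rw [← card_filter, filter_filter]
        congr 1
        ext pq
        simp [and_comm]
    _ = ∑ pq ∈ univ.filter R, #(ℬ.filter fun B => pq.1 ∈ B ∧ pq.2 ∈ B) := by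
        rw [sum_comm]
        simp only [card_filter]
    _ = #(univ.filter R) * lam := by
        rw [sum_congr rfl fun pq hpq => hdes pq.1 pq.2 (hR pq (mem_filter.mp hpq).2),
          sum_const, smul_eq_mul]

theorem card_mul_eq_of_design {ℬ : Finset (Finset α)} {lam x : ℕ}
    (hR : ∀ pq, R pq → pq.1 ≠ pq.2)
    (hdes : ∀ p q : α, p ≠ q → #(ℬ.filter fun B => p ∈ B ∧ q ∈ B) = lam)
    (hx : ∀ B ∈ ℬ, #((B ×ˢ B).filter R) = x) :
    #ℬ * x = #(univ.filter R) * lam := by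
  rw [← sum_card_filter_product_eq_of_design hR hdes, sum_congr rfl hx, sum_const, smul_eq_mul]

end Design

section Invariance

variable {α : Type*} [DecidableEq α] {R : α × α → Prop} [DecidablePred R]

theorem card_filter_image_product_image {g : Equiv.Perm α}
    (hg : ∀ pq, R (g pq.1, g pq.2) ↔ R pq) (B : Finset α) :
    #((B.image g ×ˢ B.image g).filter R) = #((B ×ˢ B).filter R) := by
  rw [← prodMap_image_product, filter_image,
    card_image_of_injective _ (g.injective.prodMap g.injective)]
  exact congrArg card (filter_congr fun pq _ => hg pq)

theorem card_filter_product_eq_of_transitive {G : Subgroup (Equiv.Perm α)}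
    {ℬ : Finset (Finset α)} (hGR : ∀ g ∈ G, ∀ pq, R (g pq.1, g pq.2) ↔ R pq)
    (htrans : ∀ B₁ ∈ ℬ, ∀ B₂ ∈ ℬ, ∃ g ∈ G, B₁.image g = B₂) {B₀ B : Finset α}
    (hB₀ : B₀ ∈ ℬ) (hB : B ∈ ℬ) :
    #((B ×ˢ B).filter R) = #((B₀ ×ˢ B₀).filter R) := by
  obtain ⟨g, hgG, rfl⟩ := htrans B₀ hB₀ B hB
  exact card_filter_image_product_image (hGR g hgG) B₀

end Invariance

theorem card_filter_prod_prod {α β : Type*} [Fintype α] [Fintype β]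
    (P : α × α → Prop) (Q : β × β → Prop) [DecidablePred P] [DecidablePred Q] :
    #(univ.filter fun pq : (α × β) × (α × β) => P (pq.1.1, pq.2.1) ∧ Q (pq.1.2, pq.2.2))
      = #(univ.filter P) * #(univ.filter Q) := by
  rw [← card_product, ← filter_product, univ_product_univ]
  exact card_equiv (Equiv.prodProdProdComm α β α β) fun _ => by simp

section Grid

variable {Δ : Type*}

/-- The relation `Ω₁²`. -/
abbrev DifferInOne (pq : (Δ × Δ) × (Δ × Δ)) : Prop :=
  (pq.1.1 = pq.2.1 ∧ pq.1.2 ≠ pq.2.2) ∨ (pq.1.1 ≠ pq.2.1 ∧ pq.1.2 = pq.2.2)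

/-- The relation `Ω₂²`. -/
abbrev DifferInBoth (pq : (Δ × Δ) × (Δ × Δ)) : Prop :=
  pq.1.1 ≠ pq.2.1 ∧ pq.1.2 ≠ pq.2.2

/-- `g` lies in `Sym(Δ) ≀ S₂` in its product action on `Δ × Δ`. -/
def IsProductAction (g : Equiv.Perm (Δ × Δ)) : Prop :=
  (∃ σ τ : Equiv.Perm Δ, ∀ p : Δ × Δ, g p = (σ p.1, τ p.2)) ∨
    (∃ σ τ : Equiv.Perm Δ, ∀ p : Δ × Δ, g p = (σ p.2, τ p.1))

theorem IsProductAction.differInOne_apply_iff {g : Equiv.Perm (Δ × Δ)} (hg : IsProductAction g)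
    (pq : (Δ × Δ) × (Δ × Δ)) : DifferInOne (g pq.1, g pq.2) ↔ DifferInOne pq := by
  rcases hg with ⟨σ, τ, h⟩ | ⟨σ, τ, h⟩
  · simp only [DifferInOne, h, ne_eq, EmbeddingLike.apply_eq_iff_eq]
  · simp only [DifferInOne, h, ne_eq, EmbeddingLike.apply_eq_iff_eq]
    tauto

theorem IsProductAction.differInBoth_apply_iff {g : Equiv.Perm (Δ × Δ)} (hg : IsProductAction g)
    (pq : (Δ × Δ) × (Δ × Δ)) : DifferInBoth (g pq.1, g pq.2) ↔ DifferInBoth pq := by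
  rcases hg with ⟨σ, τ, h⟩ | ⟨σ, τ, h⟩
  · simp only [DifferInBoth, h, ne_eq, EmbeddingLike.apply_eq_iff_eq]
  · simp only [DifferInBoth, h, ne_eq, EmbeddingLike.apply_eq_iff_eq]
    tauto

variable [Fintype Δ] [DecidableEq Δ]

theorem card_filter_fst_eq_snd : #(univ.filter fun p : Δ × Δ => p.1 = p.2) = Fintype.card Δ := by
  have h : univ.filter (fun p : Δ × Δ => p.1 = p.2) = univ.diag := by ext; simp
  rw [h, diag_card, card_univ]

theorem card_filter_fst_ne_snd :
    #(univ.filter fun p : Δ × Δ => p.1 ≠ p.2) = Fintype.card Δ * (Fintype.card Δ - 1) := by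
  have h : univ.filter (fun p : Δ × Δ => p.1 ≠ p.2) = univ.offDiag := by ext; simp
  rw [h, offDiag_card, card_univ, Nat.mul_sub_one]

theorem card_filter_differInOne :
    #(univ.filter (DifferInOne (Δ := Δ))) = 2 * Fintype.card Δ ^ 2 * (Fintype.card Δ - 1) := by
  have hdisj : Disjoint
      (univ.filter fun pq : (Δ × Δ) × (Δ × Δ) => pq.1.1 = pq.2.1 ∧ pq.1.2 ≠ pq.2.2)
      (univ.filter fun pq : (Δ × Δ) × (Δ × Δ) => pq.1.1 ≠ pq.2.1 ∧ pq.1.2 = pq.2.2) :=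
    disjoint_filter.mpr fun _ _ h₁ h₂ => h₂.1 h₁.1
  rw [filter_or, card_union_of_disjoint hdisj,
    card_filter_prod_prod (fun p : Δ × Δ => p.1 = p.2) (fun p : Δ × Δ => p.1 ≠ p.2),
    card_filter_prod_prod (fun p : Δ × Δ => p.1 ≠ p.2) (fun p : Δ × Δ => p.1 = p.2),
    card_filter_fst_eq_snd, card_filter_fst_ne_snd]
  ring

theorem card_filter_differInBoth :
    #(univ.filter (DifferInBoth (Δ := Δ))) = Fintype.card Δ ^ 2 * (Fintype.card Δ - 1) ^ 2 := by
  rw [card_filter_prod_prod (fun p : Δ × Δ => p.1 ≠ p.2) (fun p : Δ × Δ => p.1 ≠ p.2),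
    card_filter_fst_ne_snd]
  ring

end Grid

theorem stmt_4_general {Δ : Type*} [Fintype Δ] [DecidableEq Δ]
    (ω lam b : ℕ) (hΔ : Fintype.card Δ = ω)
    (ℬ : Finset (Finset (Δ × Δ))) (hne : ℬ.Nonempty) (hb : ℬ.card = b)
    (hdes : ∀ p q : Δ × Δ, p ≠ q →
      (ℬ.filter (fun B => p ∈ B ∧ q ∈ B)).card = lam)
    (G : Subgroup (Equiv.Perm (Δ × Δ)))
    (hG : ∀ g ∈ G,
      (∃ σ τ : Equiv.Perm Δ, ∀ p : Δ × Δ, g p = (σ p.1, τ p.2)) ∨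
      (∃ σ τ : Equiv.Perm Δ, ∀ p : Δ × Δ, g p = (σ p.2, τ p.1)))
    (htrans : ∀ B₁ ∈ ℬ, ∀ B₂ ∈ ℬ, ∃ g ∈ G, B₁.image (⇑g) = B₂) :
    ∃ x y : ℕ,
      (∀ B ∈ ℬ,
        ((B ×ˢ B).filter (fun pq =>
          (pq.1.1 = pq.2.1 ∧ pq.1.2 ≠ pq.2.2) ∨
          (pq.1.1 ≠ pq.2.1 ∧ pq.1.2 = pq.2.2))).card = x ∧
        ((B ×ˢ B).filter (fun pq =>
          pq.1.1 ≠ pq.2.1 ∧ pq.1.2 ≠ pq.2.2)).card = y) ∧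
      2 * ω ^ 2 * (ω - 1) * lam = b * x ∧
      ω ^ 2 * (ω - 1) ^ 2 * lam = b * y ∧
      2 * y = x * (ω - 1) := by
  obtain ⟨B₀, hB₀⟩ := hne
  have hG' : ∀ g ∈ G, IsProductAction g := hG
  have hx : ∀ B ∈ ℬ, #((B ×ˢ B).filter DifferInOne) = #((B₀ ×ˢ B₀).filter DifferInOne) :=
    fun B hB => card_filter_product_eq_of_transitive
      (fun g hg => (hG' g hg).differInOne_apply_iff) htrans hB₀ hB
  have hy : ∀ B ∈ ℬ, #((B ×ˢ B).filter DifferInBoth) = #((B₀ ×ˢ B₀).filter DifferInBoth) :=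
    fun B hB => card_filter_product_eq_of_transitive
      (fun g hg => (hG' g hg).differInBoth_apply_iff) htrans hB₀ hB
  have hbx := card_mul_eq_of_design (fun _ h heq => by simp [DifferInOne, heq] at h) hdes hx
  have hby := card_mul_eq_of_design (fun _ h heq => by simp [DifferInBoth, heq] at h) hdes hy
  rw [card_filter_differInOne, hΔ, hb] at hbx
  rw [card_filter_differInBoth, hΔ, hb] at hby
  set x := #((B₀ ×ˢ B₀).filter DifferInOne)
  set y := #((B₀ ×ˢ B₀).filter DifferInBoth)
  refine ⟨x, y, fun B hB => ⟨hx B hB, hy B hB⟩, hbx.symm, hby.symm, ?_⟩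
  have hbpos : 0 < b := hb ▸ card_pos.mpr ⟨B₀, hB₀⟩
  refine Nat.eq_of_mul_eq_mul_left hbpos ?_
  calc b * (2 * y) = 2 * (b * y) := by ring
    _ = (b * x) * (ω - 1) := by rw [hby, hbx]; ring
    _ = b * (x * (ω - 1)) := by ring

/-- Counting argument of Lemma 2.2: in a `2`-`(ω², k, λ)` design on `Ω = Δ × Δ`
admitting a block-transitive group of product-action type, every block contains
a constant number `x` of ordered pairs from `Ω₁²` and a constant number `y` of
ordered pairs from `Ω₂²`, with `2ω²(ω-1)λ = bx`, `ω²(ω-1)²λ = by` and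
`2y = x(ω-1)`. -/
theorem stmt_4 {Δ : Type*} [Fintype Δ] [DecidableEq Δ]
    (ω k lam b : ℕ) (hω : 2 ≤ ω) (hΔ : Fintype.card Δ = ω)
    (ℬ : Finset (Finset (Δ × Δ))) (hne : ℬ.Nonempty) (hb : ℬ.card = b)
    (hk : ∀ B ∈ ℬ, B.card = k) (hlam : 1 ≤ lam)
    (hdes : ∀ p q : Δ × Δ, p ≠ q →
      (ℬ.filter (fun B => p ∈ B ∧ q ∈ B)).card = lam)
    (G : Subgroup (Equiv.Perm (Δ × Δ)))
    (hG : ∀ g ∈ G,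
      (∃ σ τ : Equiv.Perm Δ, ∀ p : Δ × Δ, g p = (σ p.1, τ p.2)) ∨
      (∃ σ τ : Equiv.Perm Δ, ∀ p : Δ × Δ, g p = (σ p.2, τ p.1)))
    (hinv : ∀ g ∈ G, ∀ B ∈ ℬ, B.image (⇑g) ∈ ℬ)
    (htrans : ∀ B₁ ∈ ℬ, ∀ B₂ ∈ ℬ, ∃ g ∈ G, B₁.image (⇑g) = B₂) :
    ∃ x y : ℕ,
      (∀ B ∈ ℬ,
        ((B ×ˢ B).filter (fun pq =>
          (pq.1.1 = pq.2.1 ∧ pq.1.2 ≠ pq.2.2) ∨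
          (pq.1.1 ≠ pq.2.1 ∧ pq.1.2 = pq.2.2))).card = x ∧
        ((B ×ˢ B).filter (fun pq =>
          pq.1.1 ≠ pq.2.1 ∧ pq.1.2 ≠ pq.2.2)).card = y) ∧
      2 * ω ^ 2 * (ω - 1) * lam = b * x ∧
      ω ^ 2 * (ω - 1) ^ 2 * lam = b * y ∧
      2 * y = x * (ω - 1) :=
  stmt_4_general ω lam b hΔ ℬ hne hb hdes G hG htrans
end

section
/- Let c, m, ω be positive integers satisfying 2c(c+1)m = (2c−1)(ω+1) + 2. Then 2m² > ω. -/
/-- Lemma 2.8: if `(m, ω)` is a positive integer solution of Equation (1),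
then `2m² > ω`. -/
theorem stmt_10 (c m ω : ℕ) (hc : 0 < c) (hm : 0 < m) (hω : 0 < ω)
    (heq : 2 * c * (c + 1) * m = (2 * c - 1) * (ω + 1) + 2) :
    2 * m ^ 2 > ω := by
  -- pass to integers
  have h1 : (1 : ℕ) ≤ 2 * c := by omega
  zify [h1] at heq ⊢
  set C : ℤ := (c : ℤ) with hC
  set M : ℤ := (m : ℤ) with hM
  set W : ℤ := (ω : ℤ) with hW
  have hC1 : 1 ≤ C := by rw [hC]; exact_mod_cast hc
  have hM1 : 1 ≤ M := by rw [hM]; exact_mod_cast hm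
  have hW1 : 1 ≤ W := by rw [hW]; exact_mod_cast hω
  have hcpos : 0 < 2 * C - 1 := by linarith
  -- (2C-1) ∣ (C+1)M - 2, with quotient k
  obtain ⟨k, hk⟩ : (2 * C - 1) ∣ ((C + 1) * M - 2) :=
    ⟨W + 1 - (C + 1) * M, by linear_combination heq⟩
  have hk0 : 0 ≤ k := by nlinarith
  have hWk : W = 2 * C * k + 1 := by
    have h2 : (2 * C - 1) * (W + 1) = (2 * C - 1) * (2 * C * k + 2) := by
      linear_combination 2 * C * hk - heq
    have := mul_left_cancel₀ (ne_of_gt hcpos) h2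
    linarith
  rcases eq_or_lt_of_le hk0 with hk0' | hk1
  · -- k = 0 : (C+1)M = 2, so C = 1, M = 1, W = 1
    have h2 : (C + 1) * M = 2 := by rw [← hk0'] at hk; linarith
    have hC2 : C = 1 := by nlinarith
    have hM2 : M = 1 := by nlinarith
    rw [hWk, ← hk0', hM2]; norm_num
  · -- k ≥ 1 : (C+1) ∣ 3k - 2 with quotient 2k - M
    have hk1' : 1 ≤ k := hk1
    have hdiv2 : (C + 1) * (2 * k - M) = 3 * k - 2 := by linarith [hk]
    have h2kM : 1 ≤ 2 * k - M := by nlinarith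
    have h3k : C + 1 ≤ 3 * k - 2 := by nlinarith
    have h3m : 2 * C + 3 ≤ 3 * M := by nlinarith
    have hM2 : 2 ≤ M := by linarith
    have haux : 0 ≤ (M - 1) * (C + 1) - 2 := by nlinarith
    have hp1 : 0 ≤ M * ((C - 1) * (3 * M - 2 * C - 3)) :=
      mul_nonneg (by linarith) (mul_nonneg (by linarith) (by linarith))
    have hp2 : 0 ≤ M * ((M - 1) * (C + 1) - 2) := mul_nonneg (by linarith) haux
    have id : 2 * ((2 * C - 1) * (M ^ 2 - (C * k + 1))) =
        M * ((C - 1) * (3 * M - 2 * C - 3)) + M * ((M - 1) * (C + 1) - 2) + 2 := by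
      linear_combination 2 * C * hk
    have key : 0 ≤ (2 * C - 1) * (M ^ 2 - (C * k + 1)) := by linarith
    have key2 : 0 ≤ M ^ 2 - (C * k + 1) := by
      rcases le_or_gt 0 (M ^ 2 - (C * k + 1)) with h | h
      · exact h
      · exact absurd (mul_neg_of_pos_of_neg hcpos h) (by linarith)
    rw [hWk]
    linarith [key2]
end

section
/- Let c, m, ω be positive integers with ω ≥ 5 satisfying 2c(c+1)m = (2c−1)(ω+1) + 2, let Δ be a finite set of size ω, and let G be the group of all permutations of Ω = Δ × Δ of the form (α,β) ↦ (σ(α),τ(β)) or (α,β) ↦ (σ(β),τ(α)) with σ, τ ∈ Sym(Δ). Set k = c(c+1)m. Then there exist a positive integer λ and a nonempty finite collection ℬ of k-element subsets of Ω such that (Ω, ℬ) is a 2-(ω², k, λ) design, ℬ is invariant under G (indeed ℬ is a single G-orbit of subsets), and G acts transitively on the flags of (Ω, ℬ). -/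
/-!
The blocks are the `G`-images of a union `B₀` of `m` rectangles `Xₗ × Yₗ` with `|Xₗ| = c` and
`|Yₗ| = c + 1`, the `Xₗ` pairwise disjoint and the `Yₗ` pairwise disjoint, so `|B₀| = k`.
Permuting the rectangles, and rows and columns inside them, shows that the stabiliser of `B₀` is
transitive on `B₀`, hence `G` is flag-transitive. `G` has two orbits `O₁`, `O₂` on ordered pairs
of distinct points (on a common row or column, or not), so the number of blocks through a pair is
some `λᵢ` on `Oᵢ`. Double counting pairs inside blocks gives `|Oᵢ| λᵢ = |ℬ| nᵢ`, where `nᵢ` is the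
number of pairs of `Oᵢ` inside `B₀`, and Equation (1) is exactly `n₁ |O₂| = n₂ |O₁|`.
-/

open Finset Equiv

namespace GridDesign

lemma card_filter_product_eq_sum {α : Type*} (R : α → α → Prop) [DecidableRel R] (B : Finset α) :
    #((B ×ˢ B).filter fun t => R t.1 t.2) = ∑ p ∈ B, #(B.filter (R p)) := by
  simp only [card_filter, sum_product]

lemma card_filter_image_product {α : Type*} [DecidableEq α] (R : α → α → Prop) [DecidableRel R]
    {g : Perm α} (hR : ∀ p q, R (g p) (g q) ↔ R p q) (B : Finset α) :
    #((B.image g ×ˢ B.image g).filter fun t => R t.1 t.2) = #((B ×ˢ B).filter fun t => R t.1 t.2) :=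
  (card_equiv (g.prodCongr g) fun t => by
    simp [g.injective.mem_finset_image, hR]).symm

section BlockOrbit

variable {α : Type*} [Fintype α] [DecidableEq α]

open Classical in
noncomputable def blockOrbit (G : Subgroup (Perm α)) (B₀ : Finset α) : Finset (Finset α) :=
  univ.filter fun B => ∃ g ∈ G, B₀.image g = B

def pairCount (ℬ : Finset (Finset α)) (p q : α) : ℕ :=
  #(ℬ.filter fun B => p ∈ B ∧ q ∈ B)

variable {G : Subgroup (Perm α)} {B₀ : Finset α}

lemma mem_blockOrbit {B : Finset α} : B ∈ blockOrbit G B₀ ↔ ∃ g ∈ G, B₀.image g = B := by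
  simp [blockOrbit]

lemma self_mem_blockOrbit : B₀ ∈ blockOrbit G B₀ :=
  mem_blockOrbit.2 ⟨1, G.one_mem, by simp⟩

lemma image_mem_blockOrbit {g : Perm α} (hg : g ∈ G) {B : Finset α}
    (hB : B ∈ blockOrbit G B₀) : B.image g ∈ blockOrbit G B₀ := by
  obtain ⟨g₁, hg₁, rfl⟩ := mem_blockOrbit.1 hB
  exact mem_blockOrbit.2 ⟨g * g₁, G.mul_mem hg hg₁, by rw [image_image]; rfl⟩

lemma card_of_mem_blockOrbit {B : Finset α} (hB : B ∈ blockOrbit G B₀) : #B = #B₀ := by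
  obtain ⟨g, -, rfl⟩ := mem_blockOrbit.1 hB
  exact card_image_of_injective _ g.injective

lemma exists_flag_map_of_stabilizer
    (hstab : ∀ p ∈ B₀, ∀ q ∈ B₀, ∃ h ∈ G, h p = q ∧ B₀.image h = B₀)
    {B₁ B₂ : Finset α} (hB₁ : B₁ ∈ blockOrbit G B₀) (hB₂ : B₂ ∈ blockOrbit G B₀)
    {p₁ p₂ : α} (hp₁ : p₁ ∈ B₁) (hp₂ : p₂ ∈ B₂) :
    ∃ g ∈ G, g p₁ = p₂ ∧ B₁.image g = B₂ := by
  obtain ⟨g₁, hg₁, rfl⟩ := mem_blockOrbit.1 hB₁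
  obtain ⟨g₂, hg₂, rfl⟩ := mem_blockOrbit.1 hB₂
  obtain ⟨q₁, hq₁, rfl⟩ := mem_image.1 hp₁
  obtain ⟨q₂, hq₂, rfl⟩ := mem_image.1 hp₂
  obtain ⟨h, hh, hq, hB⟩ := hstab q₁ hq₁ q₂ hq₂
  refine ⟨g₂ * h * g₁⁻¹, G.mul_mem (G.mul_mem hg₂ hh) (G.inv_mem hg₁), by simp [hq], ?_⟩
  calc (B₀.image g₁).image ⇑(g₂ * h * g₁⁻¹) = (B₀.image h).image g₂ := by
        simp [image_image, Function.comp_def]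
    _ = B₀.image g₂ := by rw [hB]

lemma pairCount_apply_apply {g : Perm α} (hg : g ∈ G) (p q : α) :
    pairCount (blockOrbit G B₀) (g p) (g q) = pairCount (blockOrbit G B₀) p q := by
  refine card_nbij' (Finset.image ⇑g⁻¹) (Finset.image g) ?_ ?_ ?_ ?_
  · intro B hB
    simp only [mem_coe, mem_filter] at hB ⊢
    exact ⟨image_mem_blockOrbit (G.inv_mem hg) hB.1, mem_image.2 ⟨g p, hB.2.1, by simp⟩,
      mem_image.2 ⟨g q, hB.2.2, by simp⟩⟩
  · intro B hB
    simp only [mem_coe, mem_filter] at hB ⊢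
    exact ⟨image_mem_blockOrbit hg hB.1, mem_image_of_mem _ hB.2.1, mem_image_of_mem _ hB.2.2⟩
  · intro B _
    simp [image_image, Function.comp_def]
  · intro B _
    simp [image_image, Function.comp_def]

lemma card_filter_mul_eq_card_blockOrbit_mul (R : α → α → Prop) [DecidableRel R]
    (hR : ∀ g ∈ G, ∀ p q, R (g p) (g q) ↔ R p q) {lam : ℕ}
    (hlam : ∀ p q, R p q → pairCount (blockOrbit G B₀) p q = lam) :
    #(univ.filter fun t : α × α => R t.1 t.2) * lam =
      #(blockOrbit G B₀) * #((B₀ ×ˢ B₀).filter fun t => R t.1 t.2) := by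
  set ℬ := blockOrbit G B₀
  have hblock : ∀ B ∈ ℬ, #((univ.filter fun t : α × α => R t.1 t.2).filter
      fun t => t.1 ∈ B ∧ t.2 ∈ B) = #((B₀ ×ˢ B₀).filter fun t => R t.1 t.2) := by
    intro B hB
    obtain ⟨g, hg, rfl⟩ := mem_blockOrbit.1 hB
    rw [← card_filter_image_product R (hR g hg)]
    congr 1
    ext t
    simp only [mem_filter, mem_univ, true_and, mem_product]
    tauto
  calc #(univ.filter fun t : α × α => R t.1 t.2) * lam
      = ∑ t ∈ univ.filter (fun t : α × α => R t.1 t.2), pairCount ℬ t.1 t.2 := by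
        rw [sum_congr rfl fun t ht => hlam t.1 t.2 (mem_filter.1 ht).2, sum_const, smul_eq_mul]
    _ = ∑ B ∈ ℬ, #((univ.filter fun t : α × α => R t.1 t.2).filter
          fun t => t.1 ∈ B ∧ t.2 ∈ B) :=
        sum_card_bipartiteAbove_eq_sum_card_bipartiteBelow _
    _ = _ := by rw [sum_congr rfl hblock, sum_const, smul_eq_mul]

end BlockOrbit

section Grid

variable {ι I J α β : Type*} [Fintype ι] [Fintype I] [Fintype J]

@[simps]
def gridEmbedding (x : ι × I ↪ α) (y : ι × J ↪ β) : ι × I × J ↪ α × β where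
  toFun t := (x (t.1, t.2.1), y (t.1, t.2.2))
  inj' s t h := by
    simp only [Prod.mk.injEq, x.injective.eq_iff, y.injective.eq_iff] at h
    exact Prod.ext h.1.1 (Prod.ext h.1.2 h.2.2)

/-- The union over `l : ι` of the rectangles `x({l} × I) × y({l} × J)`. -/
def gridBlock (x : ι × I ↪ α) (y : ι × J ↪ β) : Finset (α × β) :=
  univ.map (gridEmbedding x y)

variable (x : ι × I ↪ α) (y : ι × J ↪ β)

lemma card_gridBlock :
    #(gridBlock x y) = Fintype.card ι * Fintype.card I * Fintype.card J := by
  simp [gridBlock, mul_assoc]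

lemma card_filter_fst_eq_of_mem_gridBlock [DecidableEq α] {p : α × β} (hp : p ∈ gridBlock x y) :
    #((gridBlock x y).filter fun q => p.1 = q.1) = Fintype.card J := by
  obtain ⟨t, -, rfl⟩ := mem_map.1 hp
  rw [gridBlock, filter_map, card_map, ← card_univ (α := J)]
  refine card_nbij' (·.2.2) (fun j => (t.1, t.2.1, j)) ?_ ?_ ?_ ?_ <;> intro s hs <;>
    simp_all [x.injective.eq_iff, Prod.ext_iff]

lemma card_filter_snd_eq_of_mem_gridBlock [DecidableEq β] {p : α × β} (hp : p ∈ gridBlock x y) :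
    #((gridBlock x y).filter fun q => p.2 = q.2) = Fintype.card I := by
  obtain ⟨t, -, rfl⟩ := mem_map.1 hp
  rw [gridBlock, filter_map, card_map, ← card_univ (α := I)]
  refine card_nbij' (·.2.1) (fun i => (t.1, i, t.2.2)) ?_ ?_ ?_ ?_ <;> intro s hs <;>
    simp_all [y.injective.eq_iff, Prod.ext_iff]

lemma prodCongr_gridEmbedding [DecidableEq α] [DecidableEq β]
    (π : Perm ι) (ρ : Perm I) (ρ' : Perm J) (t : ι × I × J) :
    prodCongr (Perm.viaFintypeEmbedding (prodCongr π ρ) x)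
        (Perm.viaFintypeEmbedding (prodCongr π ρ') y) (gridEmbedding x y t) =
      gridEmbedding x y (π t.1, ρ t.2.1, ρ' t.2.2) := by
  simp [Perm.viaFintypeEmbedding_apply_image]

lemma image_prodCongr_gridBlock [DecidableEq α] [DecidableEq β]
    (π : Perm ι) (ρ : Perm I) (ρ' : Perm J) :
    (gridBlock x y).image (prodCongr (Perm.viaFintypeEmbedding (prodCongr π ρ) x)
        (Perm.viaFintypeEmbedding (prodCongr π ρ') y)) = gridBlock x y := by
  classical
  have hcomm : ⇑(prodCongr (Perm.viaFintypeEmbedding (prodCongr π ρ) x)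
      (Perm.viaFintypeEmbedding (prodCongr π ρ') y)) ∘ gridEmbedding x y =
      gridEmbedding x y ∘ prodCongr π (prodCongr ρ ρ') :=
    funext (prodCongr_gridEmbedding x y π ρ ρ')
  rw [gridBlock, map_eq_image, image_image, hcomm, ← image_image, image_univ_equiv]

lemma exists_prodCongr_apply_eq_image_gridBlock [DecidableEq α] [DecidableEq β] {p q : α × β}
    (hp : p ∈ gridBlock x y) (hq : q ∈ gridBlock x y) :
    ∃ σ τ, prodCongr σ τ p = q ∧ (gridBlock x y).image (prodCongr σ τ) = gridBlock x y := by
  classical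
  obtain ⟨s, -, rfl⟩ := mem_map.1 hp
  obtain ⟨t, -, rfl⟩ := mem_map.1 hq
  exact ⟨_, _, (prodCongr_gridEmbedding x y (swap s.1 t.1) (swap s.2.1 t.2.1)
    (swap s.2.2 t.2.2) s).trans (by simp), image_prodCongr_gridBlock x y _ _ _⟩

end Grid

section SameLine

variable {α β : Type*} [DecidableEq α] [DecidableEq β]

def SameLine (p q : α × β) : Prop := p.1 = q.1 ∨ p.2 = q.2

instance (p q : α × β) : Decidable (SameLine p q) := inferInstanceAs (Decidable (_ ∨ _))

lemma card_filter_sameLine_add_one {B : Finset (α × β)} {p : α × β} (hp : p ∈ B) :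
    #(B.filter (SameLine p)) + 1 =
      #(B.filter fun q => p.1 = q.1) + #(B.filter fun q => p.2 = q.2) := by
  have hinter : (B.filter fun q => p.1 = q.1) ∩ (B.filter fun q => p.2 = q.2) = {p} := by
    ext q
    simp only [mem_inter, mem_filter, mem_singleton, Prod.ext_iff]
    constructor
    · rintro ⟨⟨-, h₁⟩, -, h₂⟩
      exact ⟨h₁.symm, h₂.symm⟩
    · rintro ⟨h₁, h₂⟩
      obtain rfl : q = p := Prod.ext h₁ h₂
      exact ⟨⟨hp, rfl⟩, hp, rfl⟩
  rw [← card_union_add_card_inter, hinter, card_singleton, ← filter_or]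
  rfl

variable {B : Finset (α × β)} {r s : ℕ} (hrow : ∀ p ∈ B, #(B.filter fun q => p.1 = q.1) = r)
  (hcol : ∀ p ∈ B, #(B.filter fun q => p.2 = q.2) = s)
include hrow hcol

lemma card_filter_ne_and_sameLine_product :
    #((B ×ˢ B).filter fun t => t.1 ≠ t.2 ∧ SameLine t.1 t.2) = #B * (r + s - 2) := by
  refine (card_filter_product_eq_sum (fun p q => p ≠ q ∧ SameLine p q) B).trans
    (sum_const_nat fun p hp => ?_)
  have h := card_filter_sameLine_add_one hp
  rw [hrow p hp, hcol p hp] at h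
  rw [← filter_filter, filter_ne, filter_erase, card_erase_of_mem (mem_filter.2 ⟨hp, Or.inl rfl⟩)]
  omega

lemma card_filter_not_sameLine_product :
    #((B ×ˢ B).filter fun t => ¬SameLine t.1 t.2) = #B * (#B + 1 - (r + s)) := by
  refine (card_filter_product_eq_sum (fun p q => ¬SameLine p q) B).trans
    (sum_const_nat fun p hp => ?_)
  have h := card_filter_sameLine_add_one hp
  rw [hrow p hp, hcol p hp] at h
  have := card_filter_add_card_filter_not (s := B) (SameLine p)
  omega

end SameLine

lemma card_filter_fst_eq_univ {α β : Type*} [Fintype α] [Fintype β] [DecidableEq α]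
    (p : α × β) : #((univ : Finset (α × β)).filter fun q => p.1 = q.1) = Fintype.card β := by
  rw [card_filter, Fintype.sum_prod_type]
  simp [apply_ite]

lemma card_filter_snd_eq_univ {α β : Type*} [Fintype α] [Fintype β] [DecidableEq β]
    (p : α × β) : #((univ : Finset (α × β)).filter fun q => p.2 = q.2) = Fintype.card α := by
  rw [card_filter, Fintype.sum_prod_type]
  simp

lemma eq_of_mul_eq_mul_of_cross_mul_eq {a₁ a₂ n₁ n₂ b l₁ l₂ : ℕ} (h₁ : a₁ * l₁ = b * n₁)
    (h₂ : a₂ * l₂ = b * n₂) (h : a₁ * n₂ = a₂ * n₁) (hpos : 0 < a₂ * n₁) : l₁ = l₂ := by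
  refine Nat.eq_of_mul_eq_mul_right hpos ?_
  calc l₁ * (a₂ * n₁) = a₁ * l₁ * n₂ := by rw [← h]; ring
    _ = a₂ * l₂ * n₁ := by rw [h₁, h₂]; ring
    _ = l₂ * (a₂ * n₁) := by ring

lemma succ_mul_le_of_equation_one {c m ω : ℕ} (hc : 0 < c) (hω : 2 ≤ ω)
    (heq : 2 * c * (c + 1) * m = (2 * c - 1) * (ω + 1) + 2) : (c + 1) * m ≤ ω := by
  by_contra! h
  zify [show 1 ≤ 2 * c by omega] at heq h
  nlinarith

lemma cross_mul_eq_of_equation_one {c k ω : ℕ} (hc : 0 < c) (hω : 2 ≤ ω)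
    (hk : 2 * k = (2 * c - 1) * (ω + 1) + 2) :
    ω * ω * (ω + ω - 2) * (k * (k + 1 - (c + 1 + c))) =
      ω * ω * (ω * ω + 1 - (ω + ω)) * (k * (c + 1 + c - 2)) := by
  have hω' : ω + ω ≤ ω * ω + 1 := by nlinarith
  have hk' : c + 1 + c ≤ k + 1 := by
    have : 3 * (2 * c - 1) ≤ (2 * c - 1) * (ω + 1) := by rw [mul_comm]; gcongr; omega
    omega
  zify [hω', hk', show 2 ≤ c + 1 + c by omega, show 2 ≤ ω + ω by omega,
    show 1 ≤ 2 * c by omega] at hk ⊢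
  linear_combination (ω : ℤ) * ω * (ω - 1) * k * hk

section ProductAction

variable {Δ : Type*}

lemma sameLine_apply_iff {g : Perm (Δ × Δ)}
    (hg : ∃ σ τ : Perm Δ,
      (∀ p : Δ × Δ, g p = (σ p.1, τ p.2)) ∨ (∀ p : Δ × Δ, g p = (σ p.2, τ p.1)))
    (p q : Δ × Δ) : SameLine (g p) (g q) ↔ SameLine p q := by
  obtain ⟨σ, τ, h | h⟩ := hg <;> simp [SameLine, h, or_comm]

lemma exists_perm_apply_eq_of_ne {a b c d : Δ} (hab : a ≠ b) (hcd : c ≠ d) :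
    ∃ σ : Perm Δ, σ a = c ∧ σ b = d :=
  MulAction.is_two_pretransitive_iff.1 (Perm.isMultiplyPretransitive Δ 2) hab hcd

variable {G : Subgroup (Perm (Δ × Δ))} (hprod : ∀ σ τ : Perm Δ, prodCongr σ τ ∈ G)
include hprod

lemma exists_mem_apply_eq_of_not_sameLine {a b : Δ} (hab : a ≠ b) {p q : Δ × Δ}
    (h : ¬SameLine p q) : ∃ g ∈ G, g p = (a, a) ∧ g q = (b, b) := by
  simp only [SameLine, not_or] at h
  obtain ⟨σ, hσp, hσq⟩ := exists_perm_apply_eq_of_ne h.1 hab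
  obtain ⟨τ, hτp, hτq⟩ := exists_perm_apply_eq_of_ne h.2 hab
  exact ⟨prodCongr σ τ, hprod σ τ, Prod.ext hσp hτp, Prod.ext hσq hτq⟩

lemma exists_mem_apply_eq_of_fst_eq [DecidableEq Δ] {a b : Δ} (hab : a ≠ b) {p q : Δ × Δ}
    (h₁ : p.1 = q.1) (h₂ : p.2 ≠ q.2) : ∃ g ∈ G, g p = (a, a) ∧ g q = (a, b) := by
  obtain ⟨τ, hτp, hτq⟩ := exists_perm_apply_eq_of_ne h₂ hab
  exact ⟨prodCongr (swap p.1 a) τ, hprod _ _, Prod.ext (swap_apply_left _ _) hτp,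
    Prod.ext (h₁ ▸ swap_apply_left _ _) hτq⟩

lemma exists_mem_apply_eq_of_sameLine [DecidableEq Δ] (hcomm : prodComm Δ Δ ∈ G) {a b : Δ}
    (hab : a ≠ b) {p q : Δ × Δ} (hpq : p ≠ q) (h : SameLine p q) :
    ∃ g ∈ G, g p = (a, a) ∧ g q = (a, b) := by
  rcases h with h₁ | h₂
  · exact exists_mem_apply_eq_of_fst_eq hprod hab h₁ fun h₂ => hpq (Prod.ext h₁ h₂)
  · obtain ⟨g, hg, hgp, hgq⟩ := exists_mem_apply_eq_of_fst_eq hprod hab (p := p.swap)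
      (q := q.swap) h₂ fun h₁ => hpq (Prod.ext h₁ h₂)
    exact ⟨g * prodComm Δ Δ, G.mul_mem hg hcomm, hgp, hgq⟩

variable [Fintype Δ] [DecidableEq Δ] {B₀ : Finset (Δ × Δ)} {a b : Δ} (hab : a ≠ b)
include hab

lemma pairCount_eq_of_sameLine (hcomm : prodComm Δ Δ ∈ G) {p q : Δ × Δ} (hpq : p ≠ q)
    (h : SameLine p q) :
    pairCount (blockOrbit G B₀) p q = pairCount (blockOrbit G B₀) (a, a) (a, b) := by
  obtain ⟨g, hg, hgp, hgq⟩ := exists_mem_apply_eq_of_sameLine hprod hcomm hab hpq h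
  rw [← hgp, ← hgq, pairCount_apply_apply hg]

lemma pairCount_eq_of_not_sameLine {p q : Δ × Δ} (h : ¬SameLine p q) :
    pairCount (blockOrbit G B₀) p q = pairCount (blockOrbit G B₀) (a, a) (b, b) := by
  obtain ⟨g, hg, hgp, hgq⟩ := exists_mem_apply_eq_of_not_sameLine hprod hab h
  rw [← hgp, ← hgq, pairCount_apply_apply hg]

omit hab in
/-- `ω²(2ω - 2)` and `ω²(ω² + 1 - 2ω)` are the numbers of ordered pairs of distinct points of
`Δ × Δ` on a common line and on no common line, `#B₀ (r + s - 2)` and `#B₀ (#B₀ + 1 - (r + s))`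
the numbers of those inside `B₀`. -/
lemma exists_pairCount_eq (hcomm : prodComm Δ Δ ∈ G)
    (hline : ∀ g ∈ G, ∀ p q, SameLine (g p) (g q) ↔ SameLine p q)
    {ω : ℕ} (hΔ : Fintype.card Δ = ω) (hω : 2 ≤ ω) {r s : ℕ}
    (hrow : ∀ p ∈ B₀, #(B₀.filter fun q => p.1 = q.1) = r)
    (hcol : ∀ p ∈ B₀, #(B₀.filter fun q => p.2 = q.2) = s)
    (hratio : ω * ω * (ω + ω - 2) * (#B₀ * (#B₀ + 1 - (r + s))) =
      ω * ω * (ω * ω + 1 - (ω + ω)) * (#B₀ * (r + s - 2)))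
    (hpos : 0 < #B₀ * (r + s - 2)) :
    ∃ lam, 1 ≤ lam ∧ ∀ p q, p ≠ q → pairCount (blockOrbit G B₀) p q = lam := by
  obtain ⟨a, b, hab⟩ := Fintype.exists_pair_of_one_lt_card (hΔ ▸ hω)
  have hcount₁ := card_filter_mul_eq_card_blockOrbit_mul (B₀ := B₀)
    (fun p q => p ≠ q ∧ SameLine p q) (fun g hg p q => by simp [hline g hg, g.injective.ne_iff])
    fun p q h => pairCount_eq_of_sameLine hprod hab hcomm h.1 h.2
  have hcount₂ := card_filter_mul_eq_card_blockOrbit_mul (B₀ := B₀)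
    (fun p q => ¬SameLine p q) (fun g hg p q => by simp [hline g hg])
    fun p q => pairCount_eq_of_not_sameLine hprod hab
  rw [← univ_product_univ, card_filter_ne_and_sameLine_product
    (fun p _ => card_filter_fst_eq_univ p) (fun p _ => card_filter_snd_eq_univ p),
    card_filter_ne_and_sameLine_product hrow hcol, card_univ, Fintype.card_prod, hΔ] at hcount₁
  rw [← univ_product_univ, card_filter_not_sameLine_product
    (fun p _ => card_filter_fst_eq_univ p) (fun p _ => card_filter_snd_eq_univ p),
    card_filter_not_sameLine_product hrow hcol, card_univ, Fintype.card_prod, hΔ] at hcount₂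
  have hpos' : 0 < ω * ω * (ω * ω + 1 - (ω + ω)) * (#B₀ * (r + s - 2)) := by
    have : ω + ω < ω * ω + 1 := by nlinarith
    exact Nat.mul_pos (Nat.mul_pos (Nat.mul_pos (by omega) (by omega)) (by omega)) hpos
  refine ⟨pairCount (blockOrbit G B₀) (a, a) (a, b), ?_, fun p q hpq => ?_⟩
  · refine Nat.pos_of_ne_zero fun h0 => ?_
    rw [h0, mul_zero] at hcount₁
    exact (Nat.mul_pos (card_pos.2 ⟨B₀, self_mem_blockOrbit⟩) hpos).ne hcount₁
  · by_cases h : SameLine p q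
    · exact pairCount_eq_of_sameLine hprod hab hcomm hpq h
    · rw [pairCount_eq_of_not_sameLine hprod hab h,
        eq_of_mul_eq_mul_of_cross_mul_eq hcount₁ hcount₂ hratio hpos']

end ProductAction

end GridDesign

open GridDesign in
/-- Proposition 2.10: given a positive solution `(m, ω)` (with `ω ≥ 5`) of
Equation (1) for some positive integer `c`, setting `k = c(c+1)m`, there is a
`2`-`(ω², k, λ)` design on `Ω = Δ × Δ` whose block set is a single orbit of the
wreath product `G = Sym(Δ) wr Sym(2)` (in product action) and on which `G`
acts flag-transitively. -/
theorem stmt_14 {Δ : Type*} [Fintype Δ] [DecidableEq Δ]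
    (c m ω : ℕ) (hc : 0 < c) (hm : 0 < m) (hω : 5 ≤ ω)
    (heq : 2 * c * (c + 1) * m = (2 * c - 1) * (ω + 1) + 2)
    (hΔ : Fintype.card Δ = ω)
    (G : Subgroup (Equiv.Perm (Δ × Δ)))
    (hG : ∀ g : Equiv.Perm (Δ × Δ), g ∈ G ↔
      ∃ σ τ : Equiv.Perm Δ,
        (∀ p : Δ × Δ, g p = (σ p.1, τ p.2)) ∨
        (∀ p : Δ × Δ, g p = (σ p.2, τ p.1)))
    (k : ℕ) (hk : k = c * (c + 1) * m) :
    ∃ (lam : ℕ) (ℬ : Finset (Finset (Δ × Δ))),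
      1 ≤ lam ∧ ℬ.Nonempty ∧
      (∀ B ∈ ℬ, B.card = k) ∧
      (∀ p q : Δ × Δ, p ≠ q →
        (ℬ.filter (fun B => p ∈ B ∧ q ∈ B)).card = lam) ∧
      (∀ g ∈ G, ∀ B ∈ ℬ, B.image (⇑g) ∈ ℬ) ∧
      (∃ B₀ ∈ ℬ, ∀ B : Finset (Δ × Δ), B ∈ ℬ ↔ ∃ g ∈ G, B₀.image (⇑g) = B) ∧
      (∀ B₁ ∈ ℬ, ∀ p₁ ∈ B₁, ∀ B₂ ∈ ℬ, ∀ p₂ ∈ B₂,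
        ∃ g ∈ G, g p₁ = p₂ ∧ B₁.image (⇑g) = B₂) := by
  subst hk
  have hω₂ : 2 ≤ ω := by omega
  have hcm : (c + 1) * m ≤ ω := succ_mul_le_of_equation_one hc hω₂ heq
  obtain ⟨x⟩ : Nonempty (Fin m × Fin c ↪ Δ) :=
    Function.Embedding.nonempty_of_card_le (by simp [hΔ]; nlinarith)
  obtain ⟨y⟩ : Nonempty (Fin m × Fin (c + 1) ↪ Δ) :=
    Function.Embedding.nonempty_of_card_le (by simp [hΔ]; linarith)
  have hprod : ∀ σ τ : Perm Δ, prodCongr σ τ ∈ G := fun σ τ => (hG _).2 ⟨σ, τ, Or.inl fun _ => rfl⟩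
  have hcard : #(gridBlock x y) = c * (c + 1) * m := by simp [card_gridBlock]; ring
  obtain ⟨lam, hlam, hpair⟩ := exists_pairCount_eq hprod ((hG _).2 ⟨1, 1, Or.inr fun _ => rfl⟩)
    (fun g hg => sameLine_apply_iff ((hG g).1 hg)) hΔ hω₂
    (fun p hp => (card_filter_fst_eq_of_mem_gridBlock x y hp).trans (Fintype.card_fin _))
    (fun p hp => (card_filter_snd_eq_of_mem_gridBlock x y hp).trans (Fintype.card_fin _))
    (by rw [hcard]; exact cross_mul_eq_of_equation_one hc hω₂ (by rw [← heq]; ring))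
    (by rw [hcard]; exact Nat.mul_pos (by positivity) (by omega))
  refine ⟨lam, blockOrbit G (gridBlock x y), hlam, ⟨_, self_mem_blockOrbit⟩,
    fun B hB => (card_of_mem_blockOrbit hB).trans hcard, hpair,
    fun g hg B hB => image_mem_blockOrbit hg hB, ⟨_, self_mem_blockOrbit, fun B => mem_blockOrbit⟩,
    fun B₁ hB₁ p₁ hp₁ B₂ hB₂ p₂ hp₂ => exists_flag_map_of_stabilizer ?_ hB₁ hB₂ hp₁ hp₂⟩
  intro p hp q hq
  obtain ⟨σ, τ, h, hB⟩ := exists_prodCongr_apply_eq_image_gridBlock x y hp hq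
  exact ⟨_, hprod σ τ, h, hB⟩
end

section
/- Let Δ be a finite set of size ω, let (Δ, ℬ₁) be a 2-(ω, k₁, λ₁) design with replication number r₁ and let (Δ, ℬ₂) be a 2-(ω, k₂, λ₂) design with replication number r₂, where 2 ≤ kᵢ < ω for i = 1, 2. Consider the indexed family of subsets of Δ × Δ consisting of X × Y and Y × X for all pairs (X, Y) ∈ ℬ₁ × ℬ₂ (counted with multiplicity). Then for any α, β, δ ∈ Δ with β ≠ δ, the pair of points {(α,β), (α,δ)} is contained in exactly r₁λ₂ + r₂λ₁ members of this family, while for any α, γ, β, δ ∈ Δ with α ≠ γ and β ≠ δ, the pair {(α,β), (γ,δ)} is contained in exactly 2λ₁λ₂ members; moreover r₁λ₂ + r₂λ₁ > 2λ₁λ₂, so this family is not the block family of a 2-design on Δ × Δ. -/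
open Finset

lemma prodFilterCard {Δ : Type*} [DecidableEq Δ] (ℬ₁ ℬ₂ : Finset (Finset Δ))
    (P Q : Finset Δ → Prop) [DecidablePred P] [DecidablePred Q] :
    ((ℬ₁ ×ˢ ℬ₂).filter (fun XY => P XY.1 ∧ Q XY.2)).card
      = (ℬ₁.filter P).card * (ℬ₂.filter Q).card := by
  rw [Finset.filter_product, Finset.card_product]

lemma replCount {Δ : Type*} [Fintype Δ] [DecidableEq Δ]
    (ℬ : Finset (Finset Δ)) (k lam r : ℕ)
    (hk : ∀ B ∈ ℬ, B.card = k)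
    (hd : ∀ x y : Δ, x ≠ y → (ℬ.filter (fun B => x ∈ B ∧ y ∈ B)).card = lam)
    (hr : ∀ x : Δ, (ℬ.filter (fun B => x ∈ B)).card = r) (x : Δ) :
    r * (k - 1) = lam * (Fintype.card Δ - 1) := by
  have key : ∑ B ∈ ℬ.filter (fun B => x ∈ B), (B.erase x).card
      = ∑ y ∈ Finset.univ.erase x, (ℬ.filter (fun B => x ∈ B ∧ y ∈ B)).card := by
    have h1 : ∀ B : Finset Δ, B.erase x = (Finset.univ.erase x).filter (fun y => y ∈ B) := by
      intro B; ext y; simp [and_comm]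
    calc ∑ B ∈ ℬ.filter (fun B => x ∈ B), (B.erase x).card
        = ∑ B ∈ ℬ.filter (fun B => x ∈ B), ∑ y ∈ Finset.univ.erase x,
            (if y ∈ B then 1 else 0) := by
          refine Finset.sum_congr rfl fun B _ => ?_
          rw [h1 B, Finset.card_filter]
      _ = ∑ y ∈ Finset.univ.erase x, ∑ B ∈ ℬ.filter (fun B => x ∈ B),
            (if y ∈ B then 1 else 0) := Finset.sum_comm
      _ = ∑ y ∈ Finset.univ.erase x, (ℬ.filter (fun B => x ∈ B ∧ y ∈ B)).card := by
          refine Finset.sum_congr rfl fun y _ => ?_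
          rw [← Finset.card_filter, Finset.filter_filter]
  have L : ∑ B ∈ ℬ.filter (fun B => x ∈ B), (B.erase x).card = r * (k - 1) := by
    rw [Finset.sum_congr rfl (fun B hB => ?_), Finset.sum_const, hr x, smul_eq_mul]
    simp only [Finset.mem_filter] at hB
    rw [Finset.card_erase_of_mem hB.2, hk B hB.1]
  have R : ∑ y ∈ Finset.univ.erase x, (ℬ.filter (fun B => x ∈ B ∧ y ∈ B)).card
      = lam * (Fintype.card Δ - 1) := by
    rw [Finset.sum_congr rfl (fun y hy => hd x y (Finset.ne_of_mem_erase hy).symm),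
      Finset.sum_const, Finset.card_erase_of_mem (Finset.mem_univ x),
      Finset.card_univ, smul_eq_mul, mul_comm]
  rw [← L, key, R]

/-- The number of members of the family consisting of `X × Y` and `Y × X`
(for `(X, Y) ∈ ℬ₁ × ℬ₂`, counted with multiplicity) that contain both points
`p` and `q` of `Δ × Δ`. -/
def pairCount {Δ : Type*} [DecidableEq Δ] (ℬ₁ ℬ₂ : Finset (Finset Δ))
    (p q : Δ × Δ) : ℕ :=
  ((ℬ₁ ×ˢ ℬ₂).filter (fun XY =>
    (p.1 ∈ XY.1 ∧ p.2 ∈ XY.2) ∧ (q.1 ∈ XY.1 ∧ q.2 ∈ XY.2))).card +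
  ((ℬ₁ ×ˢ ℬ₂).filter (fun XY =>
    (p.1 ∈ XY.2 ∧ p.2 ∈ XY.1) ∧ (q.1 ∈ XY.2 ∧ q.2 ∈ XY.1))).card

/-- Step 1) of Subsection 2.2: if `(Δ, ℬ₁)` is a `2`-`(ω, k₁, λ₁)` design with
replication number `r₁` and `(Δ, ℬ₂)` is a `2`-`(ω, k₂, λ₂)` design with
replication number `r₂` (with `2 ≤ kᵢ < ω`), then in the family of product
blocks `X × Y`, `Y × X` a pair of points agreeing in one coordinate lies in
`r₁λ₂ + r₂λ₁` members, while a pair differing in both coordinates lies in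
`2λ₁λ₂` members; since `r₁λ₂ + r₂λ₁ > 2λ₁λ₂`, the family is not the block
family of a `2`-design on `Δ × Δ`. -/
theorem stmt_15 {Δ : Type*} [Fintype Δ] [DecidableEq Δ]
    (ω k₁ k₂ lam₁ lam₂ r₁ r₂ : ℕ) (hΔ : Fintype.card Δ = ω)
    (ℬ₁ ℬ₂ : Finset (Finset Δ)) (h1ne : ℬ₁.Nonempty) (h2ne : ℬ₂.Nonempty)
    (hk₁ : ∀ B ∈ ℬ₁, B.card = k₁) (hk₂ : ∀ B ∈ ℬ₂, B.card = k₂)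
    (hk₁l : 2 ≤ k₁) (hk₁u : k₁ < ω) (hk₂l : 2 ≤ k₂) (hk₂u : k₂ < ω)
    (hlam₁ : 1 ≤ lam₁) (hlam₂ : 1 ≤ lam₂)
    (hd₁ : ∀ x y : Δ, x ≠ y → (ℬ₁.filter (fun B => x ∈ B ∧ y ∈ B)).card = lam₁)
    (hd₂ : ∀ x y : Δ, x ≠ y → (ℬ₂.filter (fun B => x ∈ B ∧ y ∈ B)).card = lam₂)
    (hr₁ : ∀ x : Δ, (ℬ₁.filter (fun B => x ∈ B)).card = r₁)
    (hr₂ : ∀ x : Δ, (ℬ₂.filter (fun B => x ∈ B)).card = r₂) :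
    (∀ α β δ : Δ, β ≠ δ →
      pairCount ℬ₁ ℬ₂ (α, β) (α, δ) = r₁ * lam₂ + r₂ * lam₁) ∧
    (∀ α γ β δ : Δ, α ≠ γ → β ≠ δ →
      pairCount ℬ₁ ℬ₂ (α, β) (γ, δ) = 2 * lam₁ * lam₂) ∧
    r₁ * lam₂ + r₂ * lam₁ > 2 * lam₁ * lam₂ ∧
    ¬ ∃ mu : ℕ, ∀ p q : Δ × Δ, p ≠ q → pairCount ℬ₁ ℬ₂ p q = mu := by
  have part1 : ∀ α β δ : Δ, β ≠ δ →
      pairCount ℬ₁ ℬ₂ (α, β) (α, δ) = r₁ * lam₂ + r₂ * lam₁ := by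
    intro α β δ hbd
    unfold pairCount
    have e1 : ((ℬ₁ ×ˢ ℬ₂).filter (fun XY =>
        ((α, β).1 ∈ XY.1 ∧ (α, β).2 ∈ XY.2) ∧ ((α, δ).1 ∈ XY.1 ∧ (α, δ).2 ∈ XY.2)))
        = ((ℬ₁ ×ˢ ℬ₂).filter (fun XY => (α ∈ XY.1) ∧ (β ∈ XY.2 ∧ δ ∈ XY.2))) :=
      Finset.filter_congr (fun x _ => by simp; tauto)
    have e2 : ((ℬ₁ ×ˢ ℬ₂).filter (fun XY =>
        ((α, β).1 ∈ XY.2 ∧ (α, β).2 ∈ XY.1) ∧ ((α, δ).1 ∈ XY.2 ∧ (α, δ).2 ∈ XY.1)))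
        = ((ℬ₁ ×ˢ ℬ₂).filter (fun XY => (β ∈ XY.1 ∧ δ ∈ XY.1) ∧ (α ∈ XY.2))) :=
      Finset.filter_congr (fun x _ => by simp; tauto)
    rw [e1, e2, prodFilterCard ℬ₁ ℬ₂ (fun X => α ∈ X) (fun Y => β ∈ Y ∧ δ ∈ Y),
      prodFilterCard ℬ₁ ℬ₂ (fun X => β ∈ X ∧ δ ∈ X) (fun Y => α ∈ Y),
      hr₁ α, hd₂ β δ hbd, hd₁ β δ hbd, hr₂ α]
    ring
  have part2 : ∀ α γ β δ : Δ, α ≠ γ → β ≠ δ →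
      pairCount ℬ₁ ℬ₂ (α, β) (γ, δ) = 2 * lam₁ * lam₂ := by
    intro α γ β δ hag hbd
    unfold pairCount
    have e1 : ((ℬ₁ ×ˢ ℬ₂).filter (fun XY =>
        ((α, β).1 ∈ XY.1 ∧ (α, β).2 ∈ XY.2) ∧ ((γ, δ).1 ∈ XY.1 ∧ (γ, δ).2 ∈ XY.2)))
        = ((ℬ₁ ×ˢ ℬ₂).filter (fun XY => (α ∈ XY.1 ∧ γ ∈ XY.1) ∧ (β ∈ XY.2 ∧ δ ∈ XY.2))) :=
      Finset.filter_congr (fun x _ => by simp; tauto)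
    have e2 : ((ℬ₁ ×ˢ ℬ₂).filter (fun XY =>
        ((α, β).1 ∈ XY.2 ∧ (α, β).2 ∈ XY.1) ∧ ((γ, δ).1 ∈ XY.2 ∧ (γ, δ).2 ∈ XY.1)))
        = ((ℬ₁ ×ˢ ℬ₂).filter (fun XY => (β ∈ XY.1 ∧ δ ∈ XY.1) ∧ (α ∈ XY.2 ∧ γ ∈ XY.2))) :=
      Finset.filter_congr (fun x _ => by simp; tauto)
    rw [e1, e2, prodFilterCard ℬ₁ ℬ₂ (fun X => α ∈ X ∧ γ ∈ X) (fun Y => β ∈ Y ∧ δ ∈ Y),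
      prodFilterCard ℬ₁ ℬ₂ (fun X => β ∈ X ∧ δ ∈ X) (fun Y => α ∈ Y ∧ γ ∈ Y),
      hd₁ α γ hag, hd₂ β δ hbd, hd₁ β δ hbd, hd₂ α γ hag]
    ring
  have hcard : 2 < Fintype.card Δ := by omega
  obtain ⟨x⟩ := Fintype.card_pos_iff.mp (by omega : 0 < Fintype.card Δ)
  have hr₁gt : lam₁ < r₁ := by
    have e := replCount ℬ₁ k₁ lam₁ r₁ hk₁ hd₁ hr₁ x
    rw [hΔ] at e
    have h1 : lam₁ * (k₁ - 1) < lam₁ * (ω - 1) :=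
      mul_lt_mul_of_pos_left (by omega) (by omega)
    rw [← e] at h1
    exact Nat.lt_of_mul_lt_mul_right h1
  have hr₂gt : lam₂ < r₂ := by
    have e := replCount ℬ₂ k₂ lam₂ r₂ hk₂ hd₂ hr₂ x
    rw [hΔ] at e
    have h1 : lam₂ * (k₂ - 1) < lam₂ * (ω - 1) :=
      mul_lt_mul_of_pos_left (by omega) (by omega)
    rw [← e] at h1
    exact Nat.lt_of_mul_lt_mul_right h1
  have part3 : r₁ * lam₂ + r₂ * lam₁ > 2 * lam₁ * lam₂ := by nlinarith
  refine ⟨part1, part2, part3, ?_⟩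
  rintro ⟨mu, hmu⟩
  obtain ⟨a, b, hab⟩ := Fintype.exists_pair_of_one_lt_card (α := Δ) (by omega)
  have h1 := hmu (a, a) (a, b) (by simp [hab])
  have h2 := hmu (a, a) (b, b) (by simp [hab])
  rw [part1 a a b hab] at h1
  rw [part2 a b a b hab hab] at h2
  omega
end
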